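/- Let I be a proper ideal of R = C^∞(M,ℝ) of finite codimension, let y₁, …, y_n be the points of spec(I), and set k_i = dim_ℝ(R/(I + 𝔫_{y_i})). Then (𝔪_{y₁})^{k₁} ∩ ⋯ ∩ (𝔪_{y_n})^{k_n} ⊆ I. -/

import Mathlib

/-!
Two facts about an ideal `J` of finite codimension drive the argument. First, `J` is the whole
ring as soon as its spectrum is empty: a monic polynomial relation modulo `J` satisfied by a proper
function yields a nonnegative element of `J` tending to infinity, and adding the squares of finitely
many elements of `J` covering the remaining compact set gives a nowhere vanishing, hence invertible,
element of `J`. Consequently a function that does not vanish on `spec J` is a unit modulo `J`.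

For `J = I + 𝔫_{y i}`, whose spectrum is `{y i}`, this puts the image of `𝔪_{y i}` in the Jacobson
radical of the finite-dimensional algebra `R/J`; by Nakayama the powers of that image strictly
decrease until they vanish, so `𝔪_{y i} ^ k i ⊆ J`. Finally, if `f` lies in every `I + 𝔫_{y i}`, a
bump function at each `y i` lies in the colon ideal `(I : f)`, whose spectrum is therefore empty;
hence `(I : f)` is the whole ring and `f ∈ I`.
-/

open scoped Manifold
open Module Filter Topology

noncomputable section

/-- The ℝ-algebra of smooth real-valued functions on a manifold `M` modelled on `ℝ^m`. -/
abbrev SmoothFns (m : ℕ) (M : Type*) [TopologicalSpace M]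
    [ChartedSpace (EuclideanSpace ℝ (Fin m)) M] : Type _ :=
  C^(⊤ : ℕ∞)⟮𝓡 m, M; 𝓘(ℝ, ℝ), ℝ⟯

variable {m : ℕ} {M : Type*} [TopologicalSpace M] [T2Space M] [SecondCountableTopology M]
  [ChartedSpace (EuclideanSpace ℝ (Fin m)) M] [IsManifold (𝓡 m) (⊤ : ℕ∞) M]

/-- The ideal `𝔪ₓ` of smooth functions vanishing at the point `x`. -/
def mIdeal (x : M) : Ideal (SmoothFns m M) where
  carrier := {f | f x = 0}
  add_mem' := by intro f g hf hg; simp_all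
  zero_mem' := by simp
  smul_mem' := by intro c f hf; simp_all

/-- The ideal `𝔫ₓ` of smooth functions vanishing on some neighbourhood of the point `x`. -/
def nIdeal (x : M) : Ideal (SmoothFns m M) where
  carrier := {f | ∀ᶠ y in 𝓝 x, f y = 0}
  add_mem' := by
    intro f g hf hg
    filter_upwards [hf, hg] with y h1 h2
    simp [h1, h2]
  zero_mem' := by filter_upwards with y; simp
  smul_mem' := by
    intro c f hf
    filter_upwards [hf] with y h
    simp [h]

/-- The spectrum of an ideal: the set of common zeros of its elements. -/
def idealSpec (I : Ideal (SmoothFns m M)) : Set M :=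
  {x : M | ∀ f ∈ I, f x = 0}

section FiniteDimensionalAlgebra

variable {K A : Type*} [Field K] [CommRing A] [Algebra K A]

theorem finiteDimensional_quotient_of_le {I J : Ideal A} (h : I ≤ J)
    [FiniteDimensional K (A ⧸ I)] : FiniteDimensional K (A ⧸ J) :=
  Module.Finite.of_surjective (Ideal.Quotient.factorₐ K h).toLinearMap
    (Ideal.Quotient.factor_surjective h)

theorem Ideal.pow_succ_lt_pow_of_le_jacobson_bot [IsNoetherianRing A] {b : Ideal A}
    (hb : b ≤ jacobson ⊥) {j : ℕ} (hj : b ^ j ≠ ⊥) : b ^ (j + 1) < b ^ j := by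
  refine lt_of_le_of_ne (Ideal.pow_le_pow_right j.le_succ) fun heq => hj ?_
  refine Submodule.eq_bot_of_le_smul_of_le_jacobson_bot b _ (IsNoetherian.noetherian _) ?_ hb
  rw [smul_eq_mul, ← pow_succ', heq]

theorem Ideal.pow_finrank_eq_bot_of_le_jacobson_bot [FiniteDimensional K A] {b : Ideal A}
    (hb : b ≤ jacobson ⊥) : b ^ finrank K A = ⊥ := by
  have : IsNoetherianRing A := isNoetherian_of_tower K inferInstance
  have key : ∀ j, b ^ j = ⊥ ∨ finrank K ((b ^ j).restrictScalars K) + j ≤ finrank K A := by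
    intro j
    induction j with
    | zero => exact Or.inr (Submodule.finrank_le _)
    | succ j ih =>
      by_cases hj : b ^ j = ⊥
      · exact Or.inl (by rw [pow_succ, hj, Ideal.bot_mul])
      have hlt := Submodule.finrank_lt_finrank_of_lt
        ((Submodule.restrictScalars_lt K).2 (pow_succ_lt_pow_of_le_jacobson_bot hb hj))
      exact Or.inr (by have := ih.resolve_left hj; omega)
  refine (key _).elim id fun h => ?_
  rw [← Submodule.restrictScalars_eq_bot_iff K, ← Submodule.finrank_eq_zero]
  omega

end FiniteDimensionalAlgebra

section

open Set Polynomial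

theorem exists_support_subset_apply_eq_one {x : M} {U : Set M} (hU : U ∈ 𝓝 x) :
    ∃ f : SmoothFns m M, f x = 1 ∧ Function.support f ⊆ U := by
  have := Manifold.locallyCompact_of_finiteDimensional (𝓡 m) (M := M)
  obtain ⟨f, hf0, hf1, -⟩ := exists_contMDiffMap_zero_one_nhds_of_isClosed (𝓡 m)
    (n := (⊤ : ℕ∞)) isOpen_interior.isClosed_compl (isClosed_singleton (x := x))
    (disjoint_compl_left_iff_subset.2 (singleton_subset_iff.2 (mem_interior_iff_mem_nhds.2 hU)))
  refine ⟨f, hf1.self_of_nhdsSet x rfl, fun z hz => ?_⟩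
  by_contra hzU
  exact hz (hf0.self_of_nhdsSet z fun h => hzU (interior_subset h))

theorem exists_tendsto_cocompact_atTop : ∃ h : SmoothFns m M, Tendsto h (cocompact M) atTop := by
  have := Manifold.locallyCompact_of_finiteDimensional (𝓡 m) (M := M)
  let K := CompactExhaustion.choice M
  -- glue the locally constant functions `K.find x + 2`, each of which exceeds `K.find` nearby
  obtain ⟨h, hh⟩ := exists_contMDiffMap_forall_mem_convex_of_local_const (𝓡 m)
    (n := (⊤ : ℕ∞)) (t := fun x => Ioi (K.find x : ℝ)) (fun _ => convex_Ioi _) fun x => by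
      refine ⟨(K.find x : ℝ) + 2, Filter.mem_of_superset
        (mem_interior_iff_mem_nhds.1 (K.subset_interior_succ _ (K.mem_find x))) fun z hz => ?_⟩
      have : (K.find z : ℝ) ≤ K.find x + 1 := by
        exact_mod_cast K.mem_iff_find_le.1 hz
      show (K.find z : ℝ) < K.find x + 2
      linarith
  refine ⟨h, tendsto_atTop.2 fun r => mem_cocompact.2 ⟨K ⌈r⌉₊, K.isCompact _, fun z hz => ?_⟩⟩
  have : (⌈r⌉₊ : ℝ) < K.find z := by
    exact_mod_cast not_le.1 fun h => hz (K.mem_iff_find_le.2 h)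
  exact (Nat.le_ceil r).trans (this.trans (hh z)).le

theorem exists_nonneg_mem_tendsto_cocompact_atTop (J : Ideal (SmoothFns m M))
    [FiniteDimensional ℝ (SmoothFns m M ⧸ J)] :
    ∃ F ∈ J, (∀ x, 0 ≤ F x) ∧ Tendsto F (cocompact M) atTop := by
  obtain ⟨h, hh⟩ := exists_tendsto_cocompact_atTop (m := m) (M := M)
  obtain ⟨p, hpmon, hp⟩ := IsIntegral.of_finite ℝ (Ideal.Quotient.mkₐ ℝ J h)
  -- the extra factor `X` makes the degree positive even when `p = 1`
  let q : ℝ[X] := (X * p) ^ 2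
  have hqmon : q.Monic := (monic_X.mul hpmon).pow 2
  have hqdeg : 0 < q.degree := degree_pos_of_root (a := 0) hqmon.ne_zero (by simp [q])
  have heval : ∀ x, aeval h q x = q.eval (h x) := fun x => by
    change ContMDiffMap.coeFnAlgHom (aeval h q) x = _
    rw [← aeval_algHom_apply, aeval_fn_apply, coe_aeval_eq_eval]
    rfl
  refine ⟨aeval h q, ?_, fun x => ?_, ?_⟩
  · have hp : aeval (Ideal.Quotient.mk J h) p = 0 := hp
    rw [← Ideal.Quotient.eq_zero_iff_mem, ← Ideal.Quotient.mkₐ_eq_mk ℝ, ← aeval_algHom_apply]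
    simp [q, hp]
  · rw [heval, eval_pow]
    positivity
  · have hq := tendsto_atTop_of_leadingCoeff_nonneg q hqdeg (hqmon.leadingCoeff ▸ zero_le_one)
    exact (hq.comp hh).congr fun x => (heval x).symm

theorem eq_top_of_idealSpec_eq_empty {J : Ideal (SmoothFns m M)}
    [FiniteDimensional ℝ (SmoothFns m M ⧸ J)] (hJ : idealSpec J = ∅) : J = ⊤ := by
  obtain ⟨F, hFJ, hF0, hF⟩ := exists_nonneg_mem_tendsto_cocompact_atTop J
  obtain ⟨K, hK, hKF⟩ := mem_cocompact.1 (hF.eventually_gt_atTop 0)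
  have hJx : ∀ x, ∃ g ∈ J, g x ≠ 0 := fun x => by
    by_contra! h
    exact (hJ.subset h : x ∈ (∅ : Set M))
  choose g hgJ hg using hJx
  obtain ⟨t, ht⟩ := hK.elim_finite_subcover (fun x => {z | g x z ≠ 0})
    (fun x => isOpen_ne.preimage (g x).contMDiff.continuous) fun x _ => mem_iUnion.2 ⟨x, hg x⟩
  let s : SmoothFns m M := F + ∑ x ∈ t, g x * g x
  have hs : ∀ z, 0 < s z := fun z => by
    have hsz : s z = F z + ∑ x ∈ t, g x z * g x z := by
      simp [s, ← ContMDiffMap.coeFnRingHom_apply, map_sum, Finset.sum_apply]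
    have hsq : 0 ≤ ∑ x ∈ t, g x z * g x z := Finset.sum_nonneg fun x _ => mul_self_nonneg _
    rw [hsz]
    by_cases hz : z ∈ K
    · obtain ⟨x, hxt, hxz⟩ := mem_iUnion₂.1 (ht hz)
      have := Finset.sum_pos' (fun x _ => mul_self_nonneg (g x z)) ⟨x, hxt, mul_self_pos.2 hxz⟩
      linarith [hF0 z]
    · have : 0 < F z := hKF hz
      linarith
  have hsunit : IsUnit s := IsUnit.of_mul_eq_one
    ⟨fun z => (s z)⁻¹, s.contMDiff.inv₀ fun z => (hs z).ne'⟩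
    (ContMDiffMap.ext fun z => mul_inv_cancel₀ (hs z).ne')
  exact J.eq_top_of_isUnit_mem (J.add_mem hFJ (J.sum_mem fun x _ => J.mul_mem_left _ (hgJ x)))
    hsunit

theorem isUnit_mk_of_forall_mem_idealSpec_ne_zero {J : Ideal (SmoothFns m M)}
    [FiniteDimensional ℝ (SmoothFns m M ⧸ J)] {a : SmoothFns m M}
    (ha : ∀ x ∈ idealSpec J, a x ≠ 0) : IsUnit (Ideal.Quotient.mk J a) := by
  have : FiniteDimensional ℝ (SmoothFns m M ⧸ (Ideal.span {a} ⊔ J)) :=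
    finiteDimensional_quotient_of_le le_sup_right
  have htop : Ideal.span {a} ⊔ J = ⊤ := eq_top_of_idealSpec_eq_empty <|
    eq_empty_of_forall_notMem fun x hx => ha x (fun f hf => hx f (Ideal.mem_sup_right hf))
      (hx a (Ideal.mem_sup_left (Ideal.mem_span_singleton_self a)))
  obtain ⟨r, b, hb, hrb⟩ := Ideal.mem_span_singleton_sup.1 (htop ▸ Submodule.mem_top (x := 1))
  refine IsUnit.of_mul_eq_one (Ideal.Quotient.mk J r) ?_
  rw [← map_mul, ← map_one (Ideal.Quotient.mk J), Ideal.Quotient.mk_eq_mk_iff_sub_mem, ← hrb,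
    mul_comm, sub_add_cancel_left]
  exact J.neg_mem hb

theorem idealSpec_nIdeal_subset (x : M) : idealSpec (nIdeal (m := m) x) ⊆ {x} := by
  intro z hz
  by_contra hzx
  obtain ⟨U, V, hU, hV, hUV⟩ := t2_separation_nhds hzx
  obtain ⟨f, hfz, hfU⟩ := exists_support_subset_apply_eq_one (m := m) hU
  have hfx : f ∈ nIdeal x := Filter.mem_of_superset hV fun w hw =>
    Function.notMem_support.1 fun hwf => hUV.notMem_of_mem_left (hfU hwf) hw
  exact one_ne_zero (hfz ▸ hz f hfx)

theorem mIdeal_pow_finrank_le {J : Ideal (SmoothFns m M)}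
    [FiniteDimensional ℝ (SmoothFns m M ⧸ J)] {x : M} (hJ : idealSpec J ⊆ {x}) :
    mIdeal x ^ finrank ℝ (SmoothFns m M ⧸ J) ≤ J := by
  have hjac : (mIdeal x).map (Ideal.Quotient.mk J) ≤ Ideal.jacobson ⊥ := by
    intro a ha
    obtain ⟨g, hg, rfl⟩ := (Ideal.mem_map_iff_of_surjective _ Ideal.Quotient.mk_surjective).1 ha
    refine Ideal.mem_jacobson_bot.2 fun b => ?_
    obtain ⟨h, rfl⟩ := Ideal.Quotient.mk_surjective b
    rw [← map_mul, ← map_one (Ideal.Quotient.mk J), ← map_add]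
    refine isUnit_mk_of_forall_mem_idealSpec_ne_zero fun z hz => ?_
    have hg : g x = 0 := hg
    rw [hJ hz]
    simp [hg]
  have := Ideal.pow_finrank_eq_bot_of_le_jacobson_bot (K := ℝ) hjac
  rwa [← Ideal.map_pow, Ideal.map_eq_bot_iff_le_ker, Ideal.mk_ker] at this

theorem mem_of_forall_mem_sup_nIdeal {I : Ideal (SmoothFns m M)}
    [FiniteDimensional ℝ (SmoothFns m M ⧸ I)] {f : SmoothFns m M}
    (hf : ∀ x ∈ idealSpec I, f ∈ I ⊔ nIdeal x) : f ∈ I := by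
  have hI : I ≤ I.colon {f} := fun r hr => Submodule.mem_colon_singleton.2 (I.mul_mem_right f hr)
  have : FiniteDimensional ℝ (SmoothFns m M ⧸ I.colon {f}) := finiteDimensional_quotient_of_le hI
  have hspec : idealSpec (I.colon {f}) = ∅ := by
    refine eq_empty_of_forall_notMem fun x hx => ?_
    obtain ⟨a, ha, h, hh, rfl⟩ := Submodule.mem_sup.1 (hf x fun g hg => hx g (hI hg))
    obtain ⟨χ, hχx, hχsupp⟩ := exists_support_subset_apply_eq_one (m := m) hh
    have hχh : χ * h = 0 := ContMDiffMap.ext fun z =>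
      mul_eq_zero.2 <| (em (χ z = 0)).imp_right fun hz => hχsupp hz
    have hχI : χ ∈ I.colon {a + h} := by
      rw [Submodule.mem_colon_singleton, smul_eq_mul, mul_add, hχh, add_zero]
      exact I.mul_mem_left χ ha
    exact one_ne_zero (hχx ▸ hx χ hχI)
  have h1 := (eq_top_of_idealSpec_eq_empty hspec).ge (Submodule.mem_top (x := 1))
  simpa using Submodule.mem_colon_singleton.1 h1

end

theorem pow_mIdeal_inf_le
    (I : Ideal (SmoothFns m M))
    (hfd : FiniteDimensional ℝ (SmoothFns m M ⧸ I))
    (n : ℕ) (y : Fin n → M)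
    (hrange : idealSpec I = Set.range y)
    (k : Fin n → ℕ)
    (hk : ∀ i, k i = Module.finrank ℝ (SmoothFns m M ⧸ (I + nIdeal (y i)))) :
    ⨅ i, (mIdeal (y i)) ^ (k i) ≤ I := by
  intro f hf
  refine mem_of_forall_mem_sup_nIdeal fun x hx => ?_
  obtain ⟨i, rfl⟩ := hrange.subset hx
  have : FiniteDimensional ℝ (SmoothFns m M ⧸ (I ⊔ nIdeal (y i))) :=
    finiteDimensional_quotient_of_le le_sup_left
  have hspec : idealSpec (I ⊔ nIdeal (y i)) ⊆ {y i} := fun z hz =>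
    idealSpec_nIdeal_subset (y i) fun g hg => hz g (Ideal.mem_sup_right hg)
  rw [← Submodule.add_eq_sup]
  have hfi := (Submodule.mem_iInf _).1 hf i
  rw [hk i] at hfi
  exact mIdeal_pow_finrank_le hspec hfi
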